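/- arXiv:1901.10907 — 2 statements merged into one kernel-verified Lean document; each statement's English description precedes it below -/
import Mathlib

section
/- Let $a > 1$, $b > 0$, $x_0 > 0$, and let $(x_n)$ satisfy the Pielou recurrence $x_{n+1} = \frac{a x_n}{1+b x_n}$. Then $x_n \to \frac{a-1}{b}$ as $n \to \infty$ (global attractivity of the positive equilibrium). -/
theorem stmt_9 (a b : ℝ) (ha : 1 < a) (hb : 0 < b)
    (x : ℕ → ℝ) (h0 : 0 < x 0)
    (hrec : ∀ n : ℕ, x (n + 1) = a * x n / (1 + b * x n)) :
    Filter.Tendsto x Filter.atTop (nhds ((a - 1) / b)) := by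
  have ha0 : (0:ℝ) < a := lt_trans one_pos ha
  have hpos : ∀ n, 0 < x n := by
    intro n
    induction n with
    | zero => exact h0
    | succ n ih =>
      rw [hrec n]
      have hden : 0 < 1 + b * x n := by positivity
      positivity
  set L : ℝ := b / (a - 1) with hL
  have ha1 : a - 1 ≠ 0 := by linarith
  have hLpos : 0 < L := div_pos hb (by linarith)
  have hform : ∀ n, 1 / x n = L + (1 / x 0 - L) * (1 / a) ^ n := by
    intro n
    induction n with
    | zero => simp
    | succ n ih =>
      have hxn := (hpos n).ne'
      have hden : (1 + b * x n) ≠ 0 := ne_of_gt (by have := hpos n; positivity)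
      rw [hrec n]
      have key : 1 / (a * x n / (1 + b * x n)) = (1/a) * (1/x n) + b / a := by
        field_simp
      rw [key, ih, pow_succ, hL]
      field_simp
      ring
  have hlim : Filter.Tendsto (fun n => 1 / x n) Filter.atTop (nhds L) := by
    have hgeo : Filter.Tendsto (fun n : ℕ => (1 / a) ^ n) Filter.atTop (nhds 0) := by
      apply tendsto_pow_atTop_nhds_zero_of_lt_one
      · positivity
      · rw [div_lt_one ha0]; linarith
    have : Filter.Tendsto (fun n => L + (1 / x 0 - L) * (1 / a) ^ n) Filter.atTop
        (nhds (L + (1 / x 0 - L) * 0)) :=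
      Filter.Tendsto.const_add _ (Filter.Tendsto.const_mul _ hgeo)
    have hfe : (fun n => 1 / x n) = fun n => L + (1 / x 0 - L) * (1 / a) ^ n :=
      funext hform
    rw [hfe]
    simpa using this
  have := hlim.inv₀ hLpos.ne'
  have heq : (fun n => (1 / x n)⁻¹) = x := by
    funext n; simp [(hpos n).ne']
  rw [heq] at this
  have hLinv : L⁻¹ = (a - 1) / b := by
    rw [hL]; field_simp
  rwa [hLinv] at this
end

section
/- Let $a > 1$, $b > 0$ and let $(x_n)$ satisfy the Pielou recurrence with $x_0 > 0$. Then the error to equilibrium satisfies $\left|x_{n+1} - \frac{a-1}{b}\right| \leq \frac{1}{a}\left|x_n - \frac{a-1}{b}\right|$ whenever $x_n \geq \frac{a-1}{b}$, i.e., the convergence toward the equilibrium from above is at least geometric with ratio $1/a$. -/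
theorem stmt_19 (a b : ℝ) (ha : 1 < a) (hb : 0 < b)
    (x : ℕ → ℝ) (h0 : 0 < x 0)
    (hrec : ∀ n : ℕ, x (n + 1) = a * x n / (1 + b * x n))
    (n : ℕ) (hn : (a - 1) / b ≤ x n) :
    |x (n + 1) - (a - 1) / b| ≤ (1 / a) * |x n - (a - 1) / b| := by
  have ha0 : (0:ℝ) < a := by linarith
  have hxs : 0 < (a - 1) / b := div_pos (by linarith) hb
  have hx : 0 < x n := lt_of_lt_of_le hxs hn
  have hd : (0:ℝ) < 1 + b * x n := by positivity
  have h1 : a ≤ 1 + b * x n := by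
    have := (div_le_iff₀ hb).mp hn
    nlinarith
  have key : x (n + 1) - (a - 1) / b = (x n - (a - 1) / b) / (1 + b * x n) := by
    rw [hrec]
    field_simp
    ring
  rw [key, abs_div, abs_of_pos hd]
  have h2 : (1 / a) * |x n - (a - 1) / b| = |x n - (a - 1) / b| / a := by ring
  rw [h2]
  gcongr
end
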